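/- Let t₁, …, tₙ and t̂₁, …, t̂ₙ be points of ℝ² with dist(tᵢ, t̂ᵢ) ≤ √2/2 for each i. Let F ⊆ ℝ² be a closed set and let P be a set of index pairs such that for each (i,j) ∈ P the points t̂ᵢ and t̂ⱼ lie in the same path component of F. Then the set F′ = F ∪ ⋃ᵢ [tᵢ, t̂ᵢ] (where [tᵢ, t̂ᵢ] denotes the closed line segment from tᵢ to t̂ᵢ) is closed, satisfies μH¹(F′) ≤ μH¹(F) + n·(√2/2), and for every (i,j) ∈ P the points tᵢ and tⱼ lie in the same path component of F′. -/
import Mathlib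

open MeasureTheory
open scoped ENNReal

lemma segment_isClosed {E : Type*} [NormedAddCommGroup E] [NormedSpace ℝ E]
    (x y : E) : IsClosed (segment ℝ x y) := by
  rw [segment_eq_image ℝ x y]
  exact (isCompact_Icc.image (by continuity)).isClosed

/-- The rounding lemma: if each terminal `t i` is within `√2/2` of its rounded version
`t̂ i`, and a closed set `F` joins `t̂ i` to `t̂ j` for each required pair `(i,j) ∈ P`,
then adding the `n` segments `[t i, t̂ i]` yields a closed set `F'` of 1-dimensional
Hausdorff measure at most `μH¹(F) + n·(√2/2)` joining `t i` to `t j` for each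
`(i,j) ∈ P`. -/
theorem rounding_lemma (n : ℕ)
    (t thatt : Fin n → EuclideanSpace ℝ (Fin 2))
    (hclose : ∀ i, dist (t i) (thatt i) ≤ Real.sqrt 2 / 2)
    (F : Set (EuclideanSpace ℝ (Fin 2))) (hF : IsClosed F)
    (P : Set (Fin n × Fin n))
    (hP : ∀ ij ∈ P, JoinedIn F (thatt ij.1) (thatt ij.2)) :
    IsClosed (F ∪ ⋃ i, segment ℝ (t i) (thatt i)) ∧
    μH[1] (F ∪ ⋃ i, segment ℝ (t i) (thatt i)) ≤
      μH[1] F + (n : ℝ≥0∞) * ENNReal.ofReal (Real.sqrt 2 / 2) ∧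
    ∀ ij ∈ P, JoinedIn (F ∪ ⋃ i, segment ℝ (t i) (thatt i)) (t ij.1) (t ij.2) := by
  have hsegJoin : ∀ i, JoinedIn (F ∪ ⋃ i, segment ℝ (t i) (thatt i)) (t i) (thatt i) := by
    intro i
    have h := (convex_segment (t i) (thatt i)).isPathConnected
      ⟨t i, left_mem_segment ℝ _ _⟩
    have := h.joinedIn (t i) (left_mem_segment ℝ _ _) (thatt i) (right_mem_segment ℝ _ _)
    exact this.mono ((Set.subset_iUnion (fun i => segment ℝ (t i) (thatt i)) i).trans
      Set.subset_union_right)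
  refine ⟨?_, ?_, ?_⟩
  · exact hF.union (isClosed_iUnion_of_finite fun i => segment_isClosed _ _)
  · refine (measure_union_le _ _).trans ?_
    gcongr
    refine (measure_iUnion_fintype_le _ _).trans ?_
    have : ∀ i, μH[1] (segment ℝ (t i) (thatt i)) ≤ ENNReal.ofReal (Real.sqrt 2 / 2) := by
      intro i
      rw [MeasureTheory.hausdorffMeasure_segment, edist_dist]
      exact ENNReal.ofReal_le_ofReal (hclose i)
    calc ∑ i, μH[1] (segment ℝ (t i) (thatt i))
        ≤ ∑ _i : Fin n, ENNReal.ofReal (Real.sqrt 2 / 2) :=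
          Finset.sum_le_sum fun i _ => this i
      _ = (n : ℝ≥0∞) * ENNReal.ofReal (Real.sqrt 2 / 2) := by
          simp [Finset.sum_const, nsmul_eq_mul]
  · intro ij hij
    have h1 := hsegJoin ij.1
    have h2 := hsegJoin ij.2
    have hm := (hP ij hij).mono (Set.subset_union_left :
      F ⊆ F ∪ ⋃ i, segment ℝ (t i) (thatt i))
    exact (h1.trans hm).trans h2.symm
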